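/- Over a field k of characteristic ≠ 2, a non-degenerate quadratic form that is stably hyperbolic (i.e., hyperbolic after adding ℍ(Q) for some finite-dimensional vector space Q) is hyperbolic. -/

import Mathlib

/-- The bilinear map `((x, f), (y, g)) ↦ f y` on `M × M^∨`. -/
noncomputable def evalBilin (k M : Type*) [Field k] [AddCommGroup M] [Module k M] :
    (M × Module.Dual k M) →ₗ[k] (M × Module.Dual k M) →ₗ[k] k :=
  LinearMap.mk₂ k (fun u v => u.2 v.1)
    (by intros; simp) (by intros; simp) (by intros; simp) (by intros; simp)

/-- The hyperbolic (evaluation) quadratic form `ev (x, f) = f x` on `M ⊕ M^∨`. -/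
noncomputable def evalForm (k M : Type*) [Field k] [AddCommGroup M] [Module k M] :
    QuadraticForm k (M × Module.Dual k M) :=
  LinearMap.BilinMap.toQuadraticMap (evalBilin k M)

/-- A quadratic form is hyperbolic if it is isometric to `ℍ(Q) = (Q ⊕ Q^∨, ev)` for
some finite-dimensional vector space `Q`. -/
def IsHyperbolic {k V : Type*} [Field k] [AddCommGroup V] [Module k V]
    (φ : QuadraticForm k V) : Prop :=
  ∃ m : ℕ, φ.Equivalent (evalForm k (Fin m → k))

/-!
Call `L ≤ V` a Lagrangian of `φ` if `φ` vanishes on `L` and `2 dim L = dim V`. If `φ` is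
nondegenerate and has a Lagrangian `L`, then `φ ≅ ℍ(L)`: pairing with `L` identifies `V / L` with
`L^∨`, and an isotropic lift `L^∨ → V` of this identification, together with `L`, gives the
isometry.

Now let `M` be a Lagrangian of `φ ⊥ ℍ(Q)`, which exists since that form is hyperbolic.
Take `N = {(v, q, f) ∈ M | f = 0}` and `L = pr_V N`; it is isotropic because `ℍ(Q)` vanishes on
`Q ⊕ 0`. If `S = {q | (0, q, 0) ∈ M}`, then the last coordinates of `M` annihilate `S`, so
`dim N ≥ dim M - (dim Q - dim S)`, while the kernel of `pr_V` on `N` embeds in `S`. Hence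
`dim L ≥ dim M - dim Q = dim V / 2`; the reverse inequality holds for every isotropic subspace
of a nondegenerate form, so `L` is a Lagrangian of `φ`.
-/

open Module LinearMap QuadraticMap

theorem Submodule.finrank_map_add_finrank_inf_ker {k P P' : Type*} [Field k]
    [AddCommGroup P] [Module k P] [FiniteDimensional k P] [AddCommGroup P'] [Module k P']
    (N : Submodule k P) (f : P →ₗ[k] P') :
    finrank k (N.map f) + finrank k ↥(N ⊓ ker f) = finrank k N := by
  have hker : ker (f.domRestrict N) = (N ⊓ ker f).comap N.subtype := by
    rw [ker_domRestrict, Submodule.comap_inf, Submodule.comap_subtype_self, top_inf_eq]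
  rw [← (Submodule.comapSubtypeEquivOfLe inf_le_left).finrank_eq, ← hker, ← range_domRestrict,
    finrank_range_add_finrank_ker]

section evalForm

variable {k M : Type*} [Field k] [AddCommGroup M] [Module k M]

theorem evalForm_apply (x : M × Dual k M) : evalForm k M x = x.2 x.1 := rfl

theorem polar_evalForm (x y : M × Dual k M) :
    polar (evalForm k M) x y = x.2 y.1 + y.2 x.1 := by
  simp only [QuadraticMap.polar, evalForm_apply, Prod.fst_add, Prod.snd_add, map_add, LinearMap.add_apply]
  ring

theorem evalForm_equivalent {N : Type*} [AddCommGroup N] [Module k N] (e : M ≃ₗ[k] N) :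
    (evalForm k M).Equivalent (evalForm k N) :=
  ⟨{ e.prodCongr e.symm.dualMap with map_app' := fun x => by simp [evalForm_apply] }⟩

end evalForm

namespace QuadraticMap

variable {k V : Type*} [Field k] [AddCommGroup V] [Module k V] {φ : QuadraticForm k V}

theorem polar_eq_zero_of_isotropic {L : Submodule k V} (hL : ∀ x ∈ L, φ x = 0)
    {x y : V} (hx : x ∈ L) (hy : y ∈ L) : polar φ x y = 0 := by
  simp [polar, hL _ hx, hL _ hy, hL _ (L.add_mem hx hy)]

theorem polar_prod_evalForm_inr_inl {Q : Type*} [AddCommGroup Q] [Module k Q]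
    (p : V × Q × Dual k Q) (q : Q) :
    polar (φ.prod (evalForm k Q)) p (0, q, 0) = p.2.2 q := by
  simp [polar_evalForm]

theorem exists_isotropic_of_equivalent_evalForm {Q : Type*} [AddCommGroup Q] [Module k Q]
    [FiniteDimensional k Q] (h : φ.Equivalent (evalForm k Q)) :
    ∃ L : Submodule k V, (∀ x ∈ L, φ x = 0) ∧ 2 * finrank k L = finrank k V := by
  obtain ⟨e⟩ := h
  refine ⟨(range (inr k Q (Dual k Q))).map (e.symm.toLinearEquiv : Q × Dual k Q →ₗ[k] V), ?_, ?_⟩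
  · rintro _ ⟨_, ⟨f, rfl⟩, rfl⟩
    simp [evalForm_apply]
  · rw [LinearEquiv.finrank_map_eq, finrank_range_of_inj inr_injective,
      e.toLinearEquiv.finrank_eq, finrank_prod, Subspace.dual_finrank_eq, two_mul]

variable [FiniteDimensional k V]

theorem surjective_dualMap_subtype_comp_polarBilin (hnd : (polarBilin φ).Nondegenerate)
    (L : Submodule k V) : Function.Surjective (L.subtype.dualMap ∘ₗ polarBilin φ) :=
  (dualMap_surjective_of_injective L.injective_subtype).comp
    (BilinForm.toDual _ hnd).surjective

theorem two_mul_finrank_le_of_isotropic (hnd : (polarBilin φ).Nondegenerate)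
    {L : Submodule k V} (hL : ∀ x ∈ L, φ x = 0) : 2 * finrank k L ≤ finrank k V := by
  set θ := L.subtype.dualMap ∘ₗ polarBilin φ
  have hLker : L ≤ ker θ := fun x hx => by
    ext y
    exact polar_eq_zero_of_isotropic hL hx y.2
  have hrank := finrank_range_add_finrank_ker θ
  rw [range_eq_top.2 (surjective_dualMap_subtype_comp_polarBilin hnd L), finrank_top,
    Subspace.dual_finrank_eq] at hrank
  have := Submodule.finrank_mono hLker
  omega

theorem exists_isotropic_section (hnd : (polarBilin φ).Nondegenerate)
    {L : Submodule k V} (hL : ∀ x ∈ L, φ x = 0) :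
    ∃ s : Dual k L →ₗ[k] V, (∀ f (x : L), polar φ (s f) x = f x) ∧ ∀ f, φ (s f) = 0 := by
  obtain ⟨s₀, hs₀⟩ := (L.subtype.dualMap ∘ₗ polarBilin φ).exists_rightInverse_of_surjective
    (range_eq_top.2 (surjective_dualMap_subtype_comp_polarBilin hnd L))
  have hs₀_polar (f : Dual k L) (x : L) : polar φ (s₀ f) x = f x :=
    LinearMap.congr_fun (LinearMap.congr_fun hs₀ f) x
  -- Correct `s₀` by a map `t` into `L` with `f (t f) = φ (s₀ f)`; `toBilin` writes
  -- `f ↦ φ (s₀ f)` as `f ↦ b f f` in any characteristic.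
  set b := (φ.comp s₀).toBilin (finBasis k (Dual k L))
  have hb (f : Dual k L) : b f f = φ (s₀ f) := by
    rw [← BilinMap.toQuadraticMap_apply, toQuadraticMap_toBilin, comp_apply]
  set t : Dual k L →ₗ[k] L := (evalEquiv k L).symm.toLinearMap ∘ₗ b
  have ht (f : Dual k L) : f (t f) = b f f := by
    have h : evalEquiv k L (t f) = b f := by simp [t]
    simpa using LinearMap.congr_fun h f
  refine ⟨s₀ - L.subtype ∘ₗ t, fun f x => ?_, fun f => ?_⟩
  · simp [polar_sub_left, hs₀_polar, polar_eq_zero_of_isotropic hL (t f).2 x.2]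
  · rw [LinearMap.sub_apply, LinearMap.comp_apply, Submodule.subtype_apply, sub_eq_add_neg,
      QuadraticMap.map_add φ, QuadraticMap.map_neg, hL _ (t f).2, polar_neg_right, hs₀_polar,
      ht, hb]
    ring

theorem isHyperbolic_of_isotropic (hnd : (polarBilin φ).Nondegenerate) {L : Submodule k V}
    (hL : ∀ x ∈ L, φ x = 0) (hdim : 2 * finrank k L = finrank k V) : IsHyperbolic φ := by
  obtain ⟨s, hs_polar, hs_iso⟩ := exists_isotropic_section hnd hL
  set ψ : L × Dual k L →ₗ[k] V := L.subtype.coprod s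
  have hψ (p : L × Dual k L) : φ (ψ p) = evalForm k L p := by
    rw [coprod_apply, Submodule.subtype_apply, QuadraticMap.map_add φ, hL _ p.1.2, hs_iso,
      polar_comm, hs_polar, zero_add, zero_add, evalForm_apply]
  have hψ_inj : Function.Injective ψ := by
    refine (injective_iff_map_eq_zero ψ).2 fun ⟨x, f⟩ h => ?_
    have hf : f = 0 := by
      ext y
      have := congrArg (fun v => polar φ v y) h
      simpa [ψ, polar_add_left, hs_polar, polar_eq_zero_of_isotropic hL x.2 y.2] using this
    subst hf
    simpa [ψ] using h
  have hψ_dim : finrank k (L × Dual k L) = finrank k V := by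
    rw [finrank_prod, Subspace.dual_finrank_eq, ← hdim, two_mul]
  refine ⟨finrank k L, Equivalent.trans ?_ (evalForm_equivalent (finBasis k L).equivFun)⟩
  exact Equivalent.symm ⟨{ linearEquivOfInjective ψ hψ_inj hψ_dim with map_app' := hψ }⟩

theorem exists_isotropic_of_isotropic_prod_evalForm {Q : Type*} [AddCommGroup Q] [Module k Q]
    [FiniteDimensional k Q] {M : Submodule k (V × Q × Dual k Q)}
    (hM : ∀ p ∈ M, φ.prod (evalForm k Q) p = 0) :
    ∃ L : Submodule k V, (∀ x ∈ L, φ x = 0) ∧ finrank k M ≤ finrank k L + finrank k Q := by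
  set μ : V × Q × Dual k Q →ₗ[k] Dual k Q := snd k Q (Dual k Q) ∘ₗ snd k V _
  set ι : Q →ₗ[k] V × Q × Dual k Q := inr k V _ ∘ₗ inl k Q (Dual k Q)
  set S := M.comap ι
  set N := M ⊓ ker μ
  refine ⟨N.map (fst k V _), ?_, ?_⟩
  · rintro _ ⟨p, ⟨hpM, hpμ⟩, rfl⟩
    simpa [μ, show p.2.2 = 0 from hpμ, evalForm_apply] using hM p hpM
  have hμM : M.map μ ≤ S.dualAnnihilator := by
    rintro _ ⟨p, hp, rfl⟩
    refine (Submodule.mem_dualAnnihilator _).2 fun q hq => ?_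
    change p.2.2 q = 0
    rw [← polar_prod_evalForm_inr_inl (φ := φ)]
    exact polar_eq_zero_of_isotropic hM hp hq
  have hker : N ⊓ ker (fst k V _) ≤ S.map ι := by
    rintro p ⟨⟨hpM, hpμ⟩, hp1⟩
    have hp : p = ι p.2.1 := Prod.ext hp1 (Prod.ext rfl hpμ)
    exact ⟨p.2.1, show ι p.2.1 ∈ M from hp ▸ hpM, hp.symm⟩
  have hM_rank : finrank k (M.map μ) + finrank k N = finrank k M :=
    Submodule.finrank_map_add_finrank_inf_ker M μ
  have hN_rank := Submodule.finrank_map_add_finrank_inf_ker N (fst k V (Q × Dual k Q))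
  have hS_rank := Subspace.finrank_add_finrank_dualAnnihilator_eq S
  have hμM_rank := Submodule.finrank_mono hμM
  have hker_rank := (Submodule.finrank_mono hker).trans (Submodule.finrank_map_le ι S)
  omega

end QuadraticMap

theorem stmt2_general (k : Type*) [Field k]
    (V : Type*) [AddCommGroup V] [Module k V] [FiniteDimensional k V]
    (φ : QuadraticForm k V)
    (hnd : LinearMap.BilinForm.Nondegenerate (QuadraticMap.polarBilin φ))
    (hstab : ∃ m : ℕ, IsHyperbolic (φ.prod (evalForm k (Fin m → k)))) :
    IsHyperbolic φ := by
  obtain ⟨m, n, hn⟩ := hstab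
  obtain ⟨M, hM, hMdim⟩ := exists_isotropic_of_equivalent_evalForm hn
  obtain ⟨L, hL, hLdim⟩ := exists_isotropic_of_isotropic_prod_evalForm hM
  have hLupper := two_mul_finrank_le_of_isotropic hnd hL
  simp only [finrank_prod, Subspace.dual_finrank_eq, finrank_fin_fun] at hMdim hLdim
  exact isHyperbolic_of_isotropic hnd hL (by omega)

/-- Over a field of characteristic ≠ 2, a non-degenerate stably hyperbolic quadratic
form is hyperbolic. -/
theorem stmt2 (k : Type*) [Field k] (hchar : (2 : k) ≠ 0)
    (V : Type*) [AddCommGroup V] [Module k V] [FiniteDimensional k V]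
    (φ : QuadraticForm k V)
    (hnd : LinearMap.BilinForm.Nondegenerate (QuadraticMap.polarBilin φ))
    (hstab : ∃ m : ℕ, IsHyperbolic (φ.prod (evalForm k (Fin m → k)))) :
    IsHyperbolic φ :=
  stmt2_general k V φ hnd hstab
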